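/- For every positive integer n and every s > 0 there is a positive constant c(n,s) such that c(n,s) ℋ^{s+1}(A) ≤ ℋ^s_E(A) ≤ ℋ^s(A) for every set A ⊂ 𝒫ⁿ. -/

import Mathlib

open MeasureTheory Metric Set Filter
open scoped ENNReal NNReal Topology

noncomputable section

/-- Euclidean `ℝ^(n+1)`, realized as the `L²`-product `ℝⁿ × ℝ`. -/
abbrev EucP (n : ℕ) : Type := WithLp 2 (EuclideanSpace ℝ (Fin n) × ℝ)

instance (n : ℕ) : MeasurableSpace (EucP n) := borel _
instance (n : ℕ) : BorelSpace (EucP n) := ⟨rfl⟩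

/-- The parabolic space `𝒫ⁿ = ℝⁿ × ℝ`, a type synonym of `ℝⁿ × ℝ` carrying the
parabolic metric `d(p,q) = ‖p - q‖` with `‖(x,t)‖ = √(|x|² + |t|)`. -/
def Para (n : ℕ) : Type := EuclideanSpace ℝ (Fin n) × ℝ

namespace Para

variable {n : ℕ}

instance : AddCommGroup (Para n) :=
  inferInstanceAs (AddCommGroup (EuclideanSpace ℝ (Fin n) × ℝ))

instance : Module ℝ (Para n) :=
  inferInstanceAs (Module ℝ (EuclideanSpace ℝ (Fin n) × ℝ))

/-- Build a point of `𝒫ⁿ` from a pair `(x, t)`. -/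
def ofProd (p : EuclideanSpace ℝ (Fin n) × ℝ) : Para n := p

/-- The spatial (horizontal) component `x` of `p = (x,t)`. -/
def x (p : Para n) : EuclideanSpace ℝ (Fin n) :=
  (show EuclideanSpace ℝ (Fin n) × ℝ from p).1

/-- The time (vertical) component `t` of `p = (x,t)`. -/
def t (p : Para n) : ℝ := (show EuclideanSpace ℝ (Fin n) × ℝ from p).2

theorem ext' {p q : Para n} (h1 : p.x = q.x) (h2 : p.t = q.t) : p = q := by
  have : (show EuclideanSpace ℝ (Fin n) × ℝ from p)
      = (show EuclideanSpace ℝ (Fin n) × ℝ from q) := Prod.ext h1 h2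
  exact this

theorem x_sub (p q : Para n) : (p - q).x = p.x - q.x := rfl
theorem t_sub (p q : Para n) : (p - q).t = p.t - q.t := rfl
theorem x_add (p q : Para n) : (p + q).x = p.x + q.x := rfl
theorem t_add (p q : Para n) : (p + q).t = p.t + q.t := rfl
theorem x_zero : (0 : Para n).x = 0 := rfl
theorem t_zero : (0 : Para n).t = 0 := rfl

/-- The parabolic norm `‖(x,t)‖ = √(|x|² + |t|)`. -/
def pnorm (p : Para n) : ℝ := Real.sqrt (‖p.x‖ ^ 2 + |p.t|)

theorem pnorm_zero : pnorm (0 : Para n) = 0 := by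
  simp [pnorm, x_zero, t_zero]

theorem pnorm_neg (p : Para n) : pnorm (-p) = pnorm p := by
  have hx : (-p).x = -p.x := rfl
  have ht : (-p).t = -p.t := rfl
  simp [pnorm, hx, ht]

theorem pnorm_add_le (p q : Para n) : pnorm (p + q) ≤ pnorm p + pnorm q := by
  have hx : ‖(p + q).x‖ ≤ ‖p.x‖ + ‖q.x‖ := by rw [x_add]; exact norm_add_le _ _
  have ht : |(p + q).t| ≤ |p.t| + |q.t| := by rw [t_add]; exact abs_add_le _ _
  have hB : (0:ℝ) ≤ ‖p.x‖ ^ 2 + |p.t| := by positivity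
  have hC : (0:ℝ) ≤ ‖q.x‖ ^ 2 + |q.t| := by positivity
  have h1 : ‖p.x‖ ≤ Real.sqrt (‖p.x‖ ^ 2 + |p.t|) :=
    (Real.le_sqrt (norm_nonneg _) hB).mpr (le_add_of_nonneg_right (abs_nonneg _))
  have h2 : ‖q.x‖ ≤ Real.sqrt (‖q.x‖ ^ 2 + |q.t|) :=
    (Real.le_sqrt (norm_nonneg _) hC).mpr (le_add_of_nonneg_right (abs_nonneg _))
  have e1 : Real.sqrt (‖p.x‖ ^ 2 + |p.t|) ^ 2 = ‖p.x‖ ^ 2 + |p.t| := Real.sq_sqrt hB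
  have e2 : Real.sqrt (‖q.x‖ ^ 2 + |q.t|) ^ 2 = ‖q.x‖ ^ 2 + |q.t| := Real.sq_sqrt hC
  have hmul : ‖p.x‖ * ‖q.x‖ ≤
      Real.sqrt (‖p.x‖ ^ 2 + |p.t|) * Real.sqrt (‖q.x‖ ^ 2 + |q.t|) :=
    mul_le_mul h1 h2 (norm_nonneg _) (Real.sqrt_nonneg _)
  unfold pnorm
  rw [show Real.sqrt (‖p.x‖ ^ 2 + |p.t|) + Real.sqrt (‖q.x‖ ^ 2 + |q.t|)
      = Real.sqrt ((Real.sqrt (‖p.x‖ ^ 2 + |p.t|) + Real.sqrt (‖q.x‖ ^ 2 + |q.t|)) ^ 2) from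
      (Real.sqrt_sq (by positivity)).symm]
  apply Real.sqrt_le_sqrt
  have hxx : ‖(p + q).x‖ * ‖(p + q).x‖ ≤ (‖p.x‖ + ‖q.x‖) * (‖p.x‖ + ‖q.x‖) :=
    mul_le_mul hx hx (norm_nonneg _) (by positivity)
  nlinarith [norm_nonneg (p + q).x, abs_nonneg (p + q).t]

instance : MetricSpace (Para n) where
  dist p q := pnorm (p - q)
  dist_self p := by
    show pnorm (p - p) = 0
    rw [sub_self, pnorm_zero]
  dist_comm p q := by
    show pnorm (p - q) = pnorm (q - p)
    rw [← neg_sub q p, pnorm_neg]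
  dist_triangle p q r := by
    show pnorm (p - r) ≤ pnorm (p - q) + pnorm (q - r)
    have h := pnorm_add_le (p - q) (q - r)
    rwa [sub_add_sub_cancel] at h
  eq_of_dist_eq_zero := by
    intro p q h
    have h' : pnorm (p - q) = 0 := h
    have hB : (0:ℝ) ≤ ‖(p - q).x‖ ^ 2 + |(p - q).t| := by positivity
    have h0 : ‖(p - q).x‖ ^ 2 + |(p - q).t| = 0 := by
      have := (Real.sqrt_eq_zero hB).mp h'
      exact this
    have hx : ‖(p - q).x‖ ^ 2 = 0 := by nlinarith [sq_nonneg ‖(p - q).x‖, abs_nonneg (p - q).t]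
    have ht : |(p - q).t| = 0 := by nlinarith [sq_nonneg ‖(p - q).x‖, abs_nonneg (p - q).t]
    have hx' : (p - q).x = 0 := by
      have := pow_eq_zero_iff (n := 2) (by norm_num) |>.mp hx
      exact norm_eq_zero.mp this
    have ht' : (p - q).t = 0 := abs_eq_zero.mp ht
    have : p - q = 0 := ext' (by rw [hx']; rfl) (by rw [ht']; rfl)
    exact sub_eq_zero.mp this

theorem dist_def (p q : Para n) : dist p q = pnorm (p - q) := rfl

instance : MeasurableSpace (Para n) := borel (Para n)
instance : BorelSpace (Para n) := ⟨rfl⟩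

/-- The identity map from the parabolic space to Euclidean `ℝ^(n+1)`. -/
def toEuc (p : Para n) : EucP n := WithLp.toLp 2 p

/-- The identity map from Euclidean `ℝ^(n+1)` to the parabolic space. -/
def ofEuc (p : EucP n) : Para n := WithLp.ofLp p

/-- The identity, as a linear equivalence between the parabolic space and Euclidean
`ℝ^(n+1)`. -/
def eucEquiv : Para n ≃ₗ[ℝ] EucP n where
  toFun := toEuc
  invFun := ofEuc
  map_add' _ _ := rfl
  map_smul' _ _ := rfl
  left_inv _ := rfl
  right_inv _ := rfl

/-- The orthogonal complement (in Euclidean `ℝ^(n+1)`) of a subspace of `𝒫ⁿ`. -/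
def perp (V : Submodule ℝ (Para n)) : Submodule ℝ (Para n) :=
  Submodule.comap (eucEquiv (n := n)).toLinearMap
    ((Submodule.map (eucEquiv (n := n)).toLinearMap V)ᗮ)

/-- `H(n,m)`: the horizontal homogeneous subspaces, i.e. `m`-dimensional linear
subspaces of `ℝⁿ × {0}`. -/
def Horiz (n m : ℕ) : Set (Submodule ℝ (Para n)) :=
  {V | Module.finrank ℝ V = m ∧ ∀ p ∈ V, Para.t p = 0}

/-- `V(n,m)`: the vertical homogeneous subspaces, i.e. `(m-1)`-dimensional linear
subspaces of `ℝⁿ × ℝ` containing the `t`-axis `{0} × ℝ`. -/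
def Vert (n m : ℕ) : Set (Submodule ℝ (Para n)) :=
  {V | Module.finrank ℝ V = m - 1 ∧ ofProd (0, 1) ∈ V}

/-- `P(n,m) = H(n,m) ∪ V(n,m)`, the homogeneous subspaces of parabolic Hausdorff
dimension `m`. -/
def PSet (n m : ℕ) : Set (Submodule ℝ (Para n)) := Horiz n m ∪ Vert n m

/-- The parabolic cone `X(a,V,s) = {q : d(q - a, V) < s ‖q - a‖}`. -/
def cone (a : Para n) (V : Set (Para n)) (s : ℝ) : Set (Para n) :=
  {q | Metric.infDist (q - a) V < s * dist q a}

/-- `G` is an `(m,L)`-Lipschitz graph over `V ∈ P(n,m)`: there are `A ⊆ V` and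
`g : A → V^⊥` which is `L`-Lipschitz for the parabolic norm, with
`G = {p + g(p) : p ∈ A}`. -/
def IsLipGraphOver (n m : ℕ) (L : ℝ) (V : Submodule ℝ (Para n)) (G : Set (Para n)) : Prop :=
  V ∈ PSet n m ∧ ∃ (A : Set (Para n)) (g : Para n → Para n),
    A ⊆ (V : Set (Para n)) ∧ (∀ p ∈ A, g p ∈ perp V) ∧
    (∀ p ∈ A, ∀ q ∈ A, pnorm (g p - g q) ≤ L * pnorm (p - q)) ∧
    G = (fun p => p + g p) '' A

/-- `G` is an `(m,L)`-Lipschitz graph (over some `V ∈ P(n,m)`). -/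
def IsLipGraph (n m : ℕ) (L : ℝ) (G : Set (Para n)) : Prop :=
  ∃ V, IsLipGraphOver n m L V G

/-- `E` is `(m,L)`-rectifiable: `ℋ^m`-almost all of `E` is covered by countably many
`(m,L)`-Lipschitz graphs. -/
def MLRect (n m : ℕ) (L : ℝ) (E : Set (Para n)) : Prop :=
  ∃ G : ℕ → Set (Para n), (∀ i, IsLipGraph n m L (G i)) ∧
    μH[(m : ℝ)] (E \ ⋃ i, G i) = 0

/-- `E` is LG `m`-rectifiable: for every `L > 0`, `ℋ^m`-almost all of `E` is covered
by countably many `(m,L)`-Lipschitz graphs. -/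
def LGRect (n m : ℕ) (E : Set (Para n)) : Prop :=
  ∀ L : ℝ, 0 < L → MLRect n m L E


end Para

open Para

/-!
For `|t| ≤ 1` we have `|t|² ≤ |t|`, so at scales below `1` the identity `𝒫ⁿ → ℝⁿ⁺¹` does not
increase distances, which gives `ℋ^s_E ≤ ℋ^s`. Conversely, a set of Euclidean diameter `D ≤ 1`
is cut into at most `3/D` slabs `{k D² ≤ t - u < (k + 1) D²}`, each of parabolic diameter at most
`2D`; thus every term `D^s` of a Euclidean cover becomes at most `3 · 2^(s+1) D^s` in a parabolic
`ℋ^(s+1)`-cover.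
-/

theorem Metric.ediam_image_le_of_edist_le {X Y : Type*} [PseudoEMetricSpace X]
    [PseudoEMetricSpace Y] {f : X → Y} {δ : ℝ≥0∞}
    (hf : ∀ x y, edist x y ≤ δ → edist (f x) (f y) ≤ edist x y) {t : Set X}
    (ht : ediam t ≤ δ) : ediam (f '' t) ≤ ediam t :=
  ediam_image_le_iff.2 fun _ hx _ hy =>
    (hf _ _ ((edist_le_ediam_of_mem hx hy).trans ht)).trans (edist_le_ediam_of_mem hx hy)

namespace MeasureTheory

variable {X Y : Type*} [EMetricSpace X] [MeasurableSpace X] [BorelSpace X]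
  [EMetricSpace Y] [MeasurableSpace Y] [BorelSpace Y]

theorem hausdorffMeasure_image_le_of_edist_le {f : X → Y} {δ : ℝ≥0∞} (hδ : 0 < δ)
    (hf : ∀ x y, edist x y ≤ δ → edist (f x) (f y) ≤ edist x y) {d : ℝ} (hd : 0 ≤ d)
    (s : Set X) : μH[d] (f '' s) ≤ μH[d] s := by
  simp only [Measure.hausdorffMeasure_apply]
  refine iSup₂_le fun R hR => le_iSup₂_of_le (min R δ) (lt_min hR hδ) <|
    iInf₂_mono' fun t hst => ⟨fun k => f '' (t k ∩ s), ?_, iInf_mono' fun htR => ?_⟩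
  · rw [← image_iUnion, ← iUnion_inter]
    exact image_mono (subset_inter hst subset_rfl)
  have hdiam k : ediam (f '' (t k ∩ s)) ≤ ediam (t k) :=
    (ediam_image_le_of_edist_le hf ((ediam_mono inter_subset_left).trans
      ((htR k).trans (min_le_right _ _)))).trans (ediam_mono inter_subset_left)
  refine ⟨fun k => (hdiam k).trans ((htR k).trans (min_le_left _ _)),
    ENNReal.tsum_le_tsum fun k => iSup_le fun hne => ?_⟩
  exact le_iSup_of_le (hne.mono (image_mono inter_subset_left)).of_image
    (ENNReal.rpow_le_rpow (hdiam k) hd)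

theorem hausdorffMeasure_le_mul_hausdorffMeasure_image {f : X → Y} {d d' : ℝ} (hd : 0 < d)
    {C : ℝ≥0∞} (hC₀ : C ≠ 0) (hC : C ≠ ⊤)
    (hcover : ∀ R > 0, ∃ r > 0, ∀ T : Set Y, ediam T ≤ r → ∃ U : ℕ → Set X,
      f ⁻¹' T ⊆ ⋃ k, U k ∧ (∀ k, ediam (U k) ≤ R) ∧ ∑' k, ediam (U k) ^ d' ≤ C * ediam T ^ d)
    (s : Set X) : μH[d'] s ≤ C * μH[d] (f '' s) := by
  rw [Measure.hausdorffMeasure_apply]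
  refine iSup₂_le fun R hR => ?_
  obtain ⟨r, hr, hcover⟩ := hcover R hR
  calc _ ≤ C * ⨅ (T : ℕ → Set Y) (_ : f '' s ⊆ ⋃ m, T m) (_ : ∀ m, ediam (T m) ≤ r),
        ∑' m, ⨆ _ : (T m).Nonempty, ediam (T m) ^ d := ?_
    _ ≤ C * μH[d] (f '' s) := by
      rw [Measure.hausdorffMeasure_apply]
      gcongr
      exact le_iSup₂ (f := fun r (_ : 0 < r) => ⨅ (T : ℕ → Set Y) (_ : f '' s ⊆ ⋃ m, T m)
        (_ : ∀ m, ediam (T m) ≤ r), ∑' m, ⨆ _ : (T m).Nonempty, ediam (T m) ^ d) r hr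
  simp only [ENNReal.mul_iInf_of_ne hC₀ hC]
  refine le_iInf₂ fun T hT => le_iInf fun hTr => ?_
  choose U hUcov hUdiam hUsum using fun m => hcover (T m) (hTr m)
  refine iInf₂_le_of_le (fun j => U (Nat.unpair j).1 (Nat.unpair j).2) ?_ <|
    iInf_le_of_le (fun j => hUdiam _ _) ?_
  · intro x hx
    obtain ⟨m, hm⟩ := mem_iUnion.1 (hT (mem_image_of_mem f hx))
    obtain ⟨k, hk⟩ := mem_iUnion.1 (hUcov m hm)
    exact mem_iUnion.2 ⟨Nat.pair m k, by simpa using hk⟩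
  calc ∑' j, ⨆ _ : (U (Nat.unpair j).1 (Nat.unpair j).2).Nonempty,
        ediam (U (Nat.unpair j).1 (Nat.unpair j).2) ^ d'
      ≤ ∑' j, ediam (U (Nat.unpair j).1 (Nat.unpair j).2) ^ d' :=
        ENNReal.tsum_le_tsum fun j => iSup_le fun _ => le_rfl
    _ = ∑' m, ∑' k, ediam (U m k) ^ d' := by
        rw [← ENNReal.tsum_prod, ← Nat.pairEquiv.symm.tsum_eq]; rfl
    _ ≤ ∑' m, C * ediam (T m) ^ d := ENNReal.tsum_le_tsum hUsum
    _ ≤ C * ∑' m, ⨆ _ : (T m).Nonempty, ediam (T m) ^ d := by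
        rw [ENNReal.tsum_mul_left]
        gcongr with m
        rcases (T m).eq_empty_or_nonempty with hm | hm
        · simp [hm, ENNReal.zero_rpow_of_pos hd]
        · exact le_iSup_of_le hm le_rfl

end MeasureTheory

theorem natCast_floor_two_div_add_one_mul_rpow_le {D s : ℝ} (hD : 0 < D) (hD1 : D ≤ 1) :
    ((⌊2 / D⌋₊ + 1 : ℕ) : ℝ) * (2 * D) ^ (s + 1) ≤ 3 * 2 ^ (s + 1) * D ^ s := by
  have hN : ((⌊2 / D⌋₊ + 1 : ℕ) : ℝ) ≤ 3 / D := by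
    push_cast
    have := Nat.floor_le (by positivity : 0 ≤ 2 / D)
    have : 1 ≤ 1 / D := by rw [le_div_iff₀ hD]; linarith
    linarith [show 3 / D = 2 / D + 1 / D by ring]
  calc ((⌊2 / D⌋₊ + 1 : ℕ) : ℝ) * (2 * D) ^ (s + 1) ≤ 3 / D * (2 ^ (s + 1) * (D ^ s * D)) := by
        rw [Real.mul_rpow zero_le_two hD.le, Real.rpow_add_one hD.ne']
        gcongr
    _ = 3 * 2 ^ (s + 1) * D ^ s := by field_simp

namespace Para

variable {n : ℕ}

theorem dist_eq (p q : Para n) : dist p q = √(‖p.x - q.x‖ ^ 2 + |p.t - q.t|) := rfl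

theorem dist_toEuc (p q : Para n) :
    dist (toEuc p) (toEuc q) = √(‖p.x - q.x‖ ^ 2 + |p.t - q.t| ^ 2) := by
  rw [WithLp.prod_dist_eq_of_L2, dist_eq_norm, Real.dist_eq]
  rfl

theorem norm_x_sub_le_dist_toEuc (p q : Para n) : ‖p.x - q.x‖ ≤ dist (toEuc p) (toEuc q) := by
  rw [dist_toEuc]
  exact Real.le_sqrt_of_sq_le (le_add_of_nonneg_right (sq_nonneg _))

theorem abs_t_sub_le_dist_toEuc (p q : Para n) : |p.t - q.t| ≤ dist (toEuc p) (toEuc q) := by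
  rw [dist_toEuc]
  exact Real.le_sqrt_of_sq_le (le_add_of_nonneg_left (sq_nonneg _))

theorem abs_t_sub_le_dist_sq (p q : Para n) : |p.t - q.t| ≤ dist p q ^ 2 := by
  rw [dist_eq, Real.sq_sqrt (by positivity)]
  exact le_add_of_nonneg_left (sq_nonneg _)

theorem dist_toEuc_le_dist {p q : Para n} (h : dist p q ≤ 1) :
    dist (toEuc p) (toEuc q) ≤ dist p q := by
  have ht : |p.t - q.t| ≤ 1 := (abs_t_sub_le_dist_sq p q).trans (pow_le_one₀ dist_nonneg h)
  rw [dist_toEuc, dist_eq]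
  gcongr
  nlinarith [abs_nonneg (p.t - q.t)]

theorem edist_toEuc_le_edist {p q : Para n} (h : edist p q ≤ 1) :
    edist (toEuc p) (toEuc q) ≤ edist p q := by
  rw [edist_dist, ENNReal.ofReal_le_one] at h
  rw [edist_dist, edist_dist]
  exact ENNReal.ofReal_le_ofReal (dist_toEuc_le_dist h)

theorem dist_le_two_mul {p q : Para n} {D : ℝ} (hD : 0 ≤ D) (hx : ‖p.x - q.x‖ ≤ D)
    (ht : |p.t - q.t| ≤ D ^ 2) : dist p q ≤ 2 * D := by
  rw [dist_eq, ← Real.sqrt_sq (by positivity : 0 ≤ 2 * D)]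
  gcongr
  nlinarith [norm_nonneg (p.x - q.x)]

theorem exists_slab_cover {s : ℝ} (hs : 0 < s + 1) {S : Set (Para n)} {D u : ℝ} (hD : 0 < D)
    (hD1 : D ≤ 1) (hx : ∀ p ∈ S, ∀ q ∈ S, ‖p.x - q.x‖ ≤ D)
    (ht : ∀ p ∈ S, p.t ∈ Icc u (u + 2 * D)) :
    ∃ U : ℕ → Set (Para n), S ⊆ ⋃ k, U k ∧ (∀ k, ediam (U k) ≤ ENNReal.ofReal (2 * D)) ∧
      ∑' k, ediam (U k) ^ (s + 1) ≤ ENNReal.ofReal (3 * 2 ^ (s + 1) * D ^ s) := by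
  set slab : Para n → ℕ := fun p => ⌊(p.t - u) / D ^ 2⌋₊
  set U : ℕ → Set (Para n) := fun k => {p ∈ S | slab p = k}
  have hslab {p} (hp : p ∈ S) :
      (slab p : ℝ) ≤ (p.t - u) / D ^ 2 ∧ (p.t - u) / D ^ 2 < slab p + 1 :=
    (Nat.floor_eq_iff (div_nonneg (sub_nonneg.2 (ht p hp).1) (by positivity))).1 rfl
  have hdiam k : ediam (U k) ≤ ENNReal.ofReal (2 * D) := by
    refine ediam_le fun p ⟨hp, hpk⟩ q ⟨hq, hqk⟩ => ?_
    rw [edist_dist]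
    refine ENNReal.ofReal_le_ofReal (dist_le_two_mul hD.le (hx p hp q hq) ?_)
    have hp' := hpk ▸ hslab hp
    have hq' := hqk ▸ hslab hq
    have : |(p.t - u) / D ^ 2 - (q.t - u) / D ^ 2| ≤ 1 :=
      abs_sub_le_iff.2 ⟨by linarith, by linarith⟩
    rwa [← sub_div, sub_sub_sub_cancel_right, abs_div, abs_of_pos (pow_pos hD 2),
      div_le_one (by positivity)] at this
  set N := ⌊2 / D⌋₊
  have hempty k (hk : k ∉ Finset.range (N + 1)) : U k = ∅ := by
    refine eq_empty_of_forall_notMem fun p ⟨hp, hpk⟩ => hk (Finset.mem_range_succ_iff.2 ?_)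
    rw [← hpk]
    refine Nat.floor_le_floor ?_
    rw [div_le_div_iff₀ (by positivity) hD]
    nlinarith [(ht p hp).2]
  refine ⟨U, fun p hp => mem_iUnion.2 ⟨slab p, hp, rfl⟩, hdiam, ?_⟩
  calc ∑' k, ediam (U k) ^ (s + 1)
      = ∑ k ∈ Finset.range (N + 1), ediam (U k) ^ (s + 1) :=
        tsum_eq_sum fun k hk => by simp [hempty k hk, ENNReal.zero_rpow_of_pos hs]
    _ ≤ ∑ _k ∈ Finset.range (N + 1), ENNReal.ofReal ((2 * D) ^ (s + 1)) := by
        gcongr with k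
        rw [← ENNReal.ofReal_rpow_of_nonneg (by positivity) hs.le]
        exact ENNReal.rpow_le_rpow (hdiam k) hs.le
    _ = ENNReal.ofReal (((N + 1 : ℕ) : ℝ) * (2 * D) ^ (s + 1)) := by
        rw [Finset.sum_const, Finset.card_range, nsmul_eq_mul, ENNReal.ofReal_mul (by positivity),
          ENNReal.ofReal_natCast]
    _ ≤ _ := ENNReal.ofReal_le_ofReal (natCast_floor_two_div_add_one_mul_rpow_le hD hD1)

theorem exists_cover_preimage_toEuc {s : ℝ} (hs : 0 < s + 1) {T : Set (EucP n)}
    (hT : ediam T ≤ 1) :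
    ∃ U : ℕ → Set (Para n), toEuc ⁻¹' T ⊆ ⋃ k, U k ∧ (∀ k, ediam (U k) ≤ 2 * ediam T) ∧
      ∑' k, ediam (U k) ^ (s + 1) ≤ ENNReal.ofReal (3 * 2 ^ (s + 1)) * ediam T ^ s := by
  set S := toEuc ⁻¹' T
  by_cases hS : S.Subsingleton
  · refine ⟨fun _ => S, subset_iUnion (fun _ => S) 0, fun _ => by simp [hS.ediam_eq], ?_⟩
    simp [hS.ediam_eq, ENNReal.zero_rpow_of_pos hs]
  obtain ⟨p, hp, q, hq, hpq⟩ := not_subsingleton_iff.1 hS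
  have hT_ne_top : ediam T ≠ ⊤ := ne_top_of_le_ne_top ENNReal.one_ne_top hT
  set D := (ediam T).toReal
  have hD : 0 < D := ENNReal.toReal_pos
    (ediam_pos_iff'.2 ⟨toEuc p, hp, toEuc q, hq, fun h => hpq (eucEquiv.injective h)⟩).ne' hT_ne_top
  have hD1 : D ≤ 1 := ENNReal.toReal_le_of_le_ofReal zero_le_one (by simpa using hT)
  have hdist : ∀ a ∈ S, ∀ b ∈ S, dist (toEuc a) (toEuc b) ≤ D := fun a ha b hb => by
    rw [dist_edist]
    exact ENNReal.toReal_mono hT_ne_top (edist_le_ediam_of_mem ha hb)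
  have ht : ∀ a ∈ S, a.t ∈ Icc (p.t - D) (p.t - D + 2 * D) := fun a ha => by
    have := abs_le.1 ((abs_t_sub_le_dist_toEuc a p).trans (hdist a ha p hp))
    constructor <;> linarith
  obtain ⟨U, hcov, hdiam, hsum⟩ := exists_slab_cover hs hD hD1
    (fun a ha b hb => (norm_x_sub_le_dist_toEuc a b).trans (hdist a ha b hb)) ht
  have hDT : ENNReal.ofReal D = ediam T := ENNReal.ofReal_toReal hT_ne_top
  refine ⟨U, hcov, fun k => (hdiam k).trans_eq ?_, hsum.trans_eq ?_⟩
  · rw [ENNReal.ofReal_mul zero_le_two, hDT, ENNReal.ofReal_ofNat]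
  · rw [ENNReal.ofReal_mul (by positivity), ← ENNReal.ofReal_rpow_of_pos hD, hDT]

theorem exists_fine_cover_preimage_toEuc {s : ℝ} (hs : 0 < s + 1) :
    ∀ R > 0, ∃ r > 0, ∀ T : Set (EucP n), ediam T ≤ r → ∃ U : ℕ → Set (Para n),
      toEuc ⁻¹' T ⊆ ⋃ k, U k ∧ (∀ k, ediam (U k) ≤ R) ∧
      ∑' k, ediam (U k) ^ (s + 1) ≤ ENNReal.ofReal (3 * 2 ^ (s + 1)) * ediam T ^ s := by
  intro R hR
  refine ⟨min 1 (R / 2), lt_min one_pos (ENNReal.half_pos hR.ne'), fun T hT => ?_⟩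
  obtain ⟨U, hcov, hdiam, hsum⟩ := exists_cover_preimage_toEuc hs (hT.trans (min_le_left _ _))
  refine ⟨U, hcov, fun k => ?_, hsum⟩
  calc ediam (U k) ≤ 2 * ediam T := hdiam k
    _ ≤ 2 * (R / 2) := by gcongr; exact hT.trans (min_le_right _ _)
    _ = R := ENNReal.mul_div_cancel two_ne_zero ENNReal.ofNat_ne_top

end Para

theorem hausdorff_parabolic_euclidean_comparison_general (n : ℕ) (s : ℝ) (hs : 0 < s) :
    ∃ c : ℝ, 0 < c ∧ ∀ A : Set (Para n),
      ENNReal.ofReal c * μH[s + 1] A ≤ μH[s] (toEuc '' A) ∧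
      μH[s] (toEuc '' A) ≤ μH[s] A := by
  set C : ℝ := 3 * 2 ^ (s + 1)
  have hC : 0 < C := by positivity
  refine ⟨C⁻¹, inv_pos.2 hC, fun A => ⟨?_, ?_⟩⟩
  · have hcomparison : μH[s + 1] A ≤ ENNReal.ofReal C * μH[s] (toEuc '' A) :=
      hausdorffMeasure_le_mul_hausdorffMeasure_image hs (ENNReal.ofReal_pos.2 hC).ne'
        ENNReal.ofReal_ne_top (exists_fine_cover_preimage_toEuc (by linarith)) A
    calc ENNReal.ofReal C⁻¹ * μH[s + 1] A
        ≤ ENNReal.ofReal C⁻¹ * (ENNReal.ofReal C * μH[s] (toEuc '' A)) := by gcongr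
      _ = μH[s] (toEuc '' A) := by
        rw [← mul_assoc, ← ENNReal.ofReal_mul (inv_nonneg.2 hC.le), inv_mul_cancel₀ hC.ne',
          ENNReal.ofReal_one, one_mul]
  · exact hausdorffMeasure_image_le_of_edist_le one_pos (fun _ _ => edist_toEuc_le_edist) hs.le A

/-- **Lemma 2.1.** `c(n,s) ℋ^{s+1}(A) ≤ ℋ^s_E(A) ≤ ℋ^s(A)` for all `A ⊆ 𝒫ⁿ`. -/
theorem hausdorff_parabolic_euclidean_comparison (n : ℕ) (hn : 0 < n) (s : ℝ) (hs : 0 < s) :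
    ∃ c : ℝ, 0 < c ∧ ∀ A : Set (Para n),
      ENNReal.ofReal c * μH[s + 1] A ≤ μH[s] (toEuc '' A) ∧
      μH[s] (toEuc '' A) ≤ μH[s] A :=
  hausdorff_parabolic_euclidean_comparison_general n s hs
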